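/- arXiv:1311.4149 — 5 statements merged into one kernel-verified Lean document; each statement's English description precedes it below -/
import Mathlib

section
/- For all functions A, B, C : ZMod 2 → ZMod 2, at most three of the four question triples (r,s,t) in Q = {(0,0,0),(0,1,1),(1,0,1),(1,1,0)} satisfy A(r) + B(s) + C(t) = r∨s∨t (where r∨s∨t denotes 0 ∈ ZMod 2 for the triple (0,0,0) and 1 ∈ ZMod 2 for the other three triples); moreover there exist functions A, B, C for which exactly three of the four triples satisfy this equation. Hence the optimal deterministic classical strategy for the three-player GHZ game wins exactly 3 of the 4 question triples. -/
/-- The question set of the three-player GHZ game. -/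
def ghzQuestions : Finset (ZMod 2 × ZMod 2 × ZMod 2) :=
  {(0, 0, 0), (0, 1, 1), (1, 0, 1), (1, 1, 0)}

/-- The winning condition on a question triple for the deterministic strategy `(A, B, C)`:
the XOR of the answers equals `r ∨ s ∨ t` (which is `0` for `(0,0,0)` and `1` otherwise). -/
def ghzWins (A B C : ZMod 2 → ZMod 2) (q : ZMod 2 × ZMod 2 × ZMod 2) : Prop :=
  A q.1 + B q.2.1 + C q.2.2 = if q = (0, 0, 0) then 0 else 1

instance : DecidablePred (ghzWins A B C) := fun q => by unfold ghzWins; infer_instance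

/-- Every deterministic classical strategy wins at most 3 of the 4 question triples,
and some strategy wins exactly 3: the optimal classical success rate is 3/4. -/
theorem ghz_classical_optimum :
    (∀ A B C : ZMod 2 → ZMod 2,
      (ghzQuestions.filter (ghzWins A B C)).card ≤ 3) ∧
    (∃ A B C : ZMod 2 → ZMod 2,
      (ghzQuestions.filter (ghzWins A B C)).card = 3) := by
  constructor
  · decide
  · exact ⟨fun _ => 1, fun _ => 0, fun _ => 0, by decide⟩
end

section
/- Let H = (1/√2)·!![1,1;1,−1] be the 2×2 Hadamard matrix over ℂ, and write H⁰ = 1 (the 2×2 identity) and H¹ = H. Let Ψ be the 3-qubit state with Ψ₀₀₀ = 1/2, Ψ₀₁₁ = Ψ₁₀₁ = Ψ₁₁₀ = −1/2 and all other components zero. Then for every (r,s,t) ∈ {(0,0,0),(0,1,1),(1,0,1),(1,1,0)} and every (a,b,c) ∈ {0,1}³ with a + b + c ≢ r∨s∨t (mod 2) (where r∨s∨t = 0 for (0,0,0) and 1 for the other three triples), the component Σ_{a',b',c'} (H^r)_{a a'} (H^s)_{b b'} (H^t)_{c c'} Ψ_{a'b'c'} of (H^r ⊗ H^s ⊗ H^t)Ψ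 vanishes. Hence the quantum strategy in which each player measures their qubit of Ψ in the computational basis on question 0 and in the Hadamard basis on question 1 wins the three-player game with certainty. -/
open scoped Matrix

/-- The 2×2 Hadamard matrix. -/
noncomputable def Hadamard : Matrix (Fin 2) (Fin 2) ℂ :=
  ((1 : ℂ) / Real.sqrt 2) • !![1, 1; 1, -1]

/-- The GHZ-type state `½(|000⟩ − |011⟩ − |101⟩ − |110⟩)` used in the winning quantum
strategy of the three-player game. -/
noncomputable def winState : Fin 2 → Fin 2 → Fin 2 → ℂ := fun i j k =>
  if (i, j, k) = (0, 0, 0) then 1 / 2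
  else if (i, j, k) = (0, 1, 1) ∨ (i, j, k) = (1, 0, 1) ∨ (i, j, k) = (1, 1, 0) then -(1 / 2)
  else 0

/-- For every question triple `(r,s,t)` of the game and every answer triple `(a,b,c)`
violating the winning condition `a ⊕ b ⊕ c = r ∨ s ∨ t`, the corresponding amplitude of
`(H^r ⊗ H^s ⊗ H^t)Ψ` vanishes: measuring in the computational basis on question 0 and in
the Hadamard basis on question 1 wins the game with certainty. -/
theorem ghz_quantum_strategy_wins :
    ∀ r s t : Fin 2,
      (r, s, t) ∈ ({(0, 0, 0), (0, 1, 1), (1, 0, 1), (1, 1, 0)} :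
        Set (Fin 2 × Fin 2 × Fin 2)) →
    ∀ a b c : Fin 2,
      ((a : ℕ) + (b : ℕ) + (c : ℕ)) % 2 ≠ (if (r, s, t) = (0, 0, 0) then 0 else 1) →
      ∑ a' : Fin 2, ∑ b' : Fin 2, ∑ c' : Fin 2,
        (Hadamard ^ (r : ℕ)) a a' * (Hadamard ^ (s : ℕ)) b b' *
          (Hadamard ^ (t : ℕ)) c c' * winState a' b' c' = 0 := by
  intro r s t hrst a b c habc
  simp only [Set.mem_insert_iff, Set.mem_singleton_iff, Prod.mk.injEq] at hrst
  fin_cases r <;> fin_cases s <;> fin_cases t <;>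
    (try exact absurd hrst (by decide)) <;> clear hrst <;>
    fin_cases a <;> fin_cases b <;> fin_cases c <;>
    (try exact absurd habc (by decide)) <;> clear habc <;>
    norm_num [Fin.sum_univ_two, Hadamard, winState, pow_one, pow_zero, Matrix.one_apply,
      Matrix.smul_apply, Matrix.cons_val_zero, Matrix.cons_val_one, Matrix.head_cons,
      Prod.mk.injEq]
end

section
/- For every C, D ∈ J = ℂ³, the linear maps φ(C) and ψ(D) on the 3-qubit Freudenthal triple system F preserve the antisymmetric bilinear form: {φ(C)x, φ(C)y} = {x,y} and {ψ(D)x, ψ(D)y} = {x,y} for all x, y ∈ F. -/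
/-- The 3-qubit cubic Jordan algebra `J = ℂ ⊕ ℂ ⊕ ℂ`. -/
abbrev JABC : Type := ℂ × ℂ × ℂ

/-- Cubic norm `N(A) = A₁A₂A₃`. -/
def cubicN (A : JABC) : ℂ := A.1 * A.2.1 * A.2.2

/-- Trace bilinear form `Tr(A,B) = A₁B₁ + A₂B₂ + A₃B₃`. -/
def trJ (A B : JABC) : ℂ := A.1 * B.1 + A.2.1 * B.2.1 + A.2.2 * B.2.2

/-- Quadratic adjoint `A♯ = (A₂A₃, A₃A₁, A₁A₂)`. -/
def sharpJ (A : JABC) : JABC := (A.2.1 * A.2.2, A.2.2 * A.1, A.1 * A.2.1)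

/-- Cross product `A × C = (A+C)♯ − A♯ − C♯`. -/
def crossJ (A C : JABC) : JABC := sharpJ (A + C) - sharpJ A - sharpJ C

/-- The 3-qubit Freudenthal triple system `F = ℂ ⊕ ℂ ⊕ J ⊕ J`, with elements `(α, β, A, B)`. -/
abbrev FABC : Type := ℂ × ℂ × JABC × JABC

/-- The quartic form of the FTS. -/
def quarticQ (x : FABC) : ℂ :=
  -2 * (x.1 * x.2.1 - trJ x.2.2.1 x.2.2.2) ^ 2 -
    8 * (x.1 * cubicN x.2.2.1 + x.2.1 * cubicN x.2.2.2 -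
      trJ (sharpJ x.2.2.1) (sharpJ x.2.2.2))

/-- The antisymmetric bilinear form `{x,y}` of the FTS. -/
def bilinF (x y : FABC) : ℂ :=
  x.1 * y.2.1 - x.2.1 * y.1 + trJ x.2.2.1 y.2.2.2 - trJ x.2.2.2 y.2.2.1

/-- The transformation `φ(C)` of the FTS. -/
def phiF (C : JABC) (x : FABC) : FABC :=
  (x.1 + trJ x.2.2.2 C + trJ x.2.2.1 (sharpJ C) + x.2.1 * cubicN C,
   x.2.1,
   x.2.2.1 + x.2.1 • C,
   x.2.2.2 + crossJ x.2.2.1 C + x.2.1 • sharpJ C)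

/-- The transformation `ψ(D)` of the FTS. -/
def psiF (D : JABC) (x : FABC) : FABC :=
  (x.1,
   x.2.1 + trJ x.2.2.1 D + trJ x.2.2.2 (sharpJ D) + x.1 * cubicN D,
   x.2.2.1 + crossJ x.2.2.2 D + x.1 • sharpJ D,
   x.2.2.2 + x.1 • D)

/-- `φ(C)` and `ψ(D)` preserve the antisymmetric bilinear form of the FTS. -/
theorem phi_psi_preserve_bilinear :
    ∀ (C D : JABC) (x y : FABC),
      bilinF (phiF C x) (phiF C y) = bilinF x y ∧
      bilinF (psiF D x) (psiF D y) = bilinF x y := by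
  rintro ⟨c1,c2,c3⟩ ⟨d1,d2,d3⟩ ⟨a,b,⟨A1,A2,A3⟩,⟨B1,B2,B3⟩⟩ ⟨g,e,⟨P1,P2,P3⟩,⟨Q1,Q2,Q3⟩⟩
  constructor <;>
  · simp only [bilinF, phiF, psiF, trJ, crossJ, sharpJ, cubicN, Prod.smul_def, smul_eq_mul,
      Prod.fst_add, Prod.snd_add, Prod.fst_sub, Prod.snd_sub]
    ring
end

section
/- In the 3-qubit Freudenthal triple system F, the composite map 𝒵 = φ(−𝟙) ∘ ψ(𝟙) ∘ φ(−𝟙), where 𝟙 = (1,1,1) ∈ ℂ³, sends (α, β, A, B) to (−β, α, −B, A) for every (α, β, A, B) ∈ F. -/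
/-- The composite `𝒵 = φ(−𝟙) ∘ ψ(𝟙) ∘ φ(−𝟙)` acts as `(α, β, A, B) ↦ (−β, α, −B, A)`. -/
theorem Z_map_eq :
    ∀ x : FABC,
      phiF (-(1, 1, 1)) (psiF (1, 1, 1) (phiF (-(1, 1, 1)) x)) =
        (-x.2.1, x.1, -x.2.2.2, x.2.2.1) := by
  rintro ⟨a, b, ⟨A1, A2, A3⟩, ⟨B1, B2, B3⟩⟩
  simp only [phiF, psiF, trJ, sharpJ, crossJ, cubicN, Prod.mk_add_mk, Prod.mk_mul_mk,
    Prod.smul_mk, smul_eq_mul, Prod.neg_mk, Prod.mk.injEq, Prod.mk_sub_mk]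
  norm_num
  constructor
  · ring
  constructor
  · ring
  refine ⟨⟨?_, ?_, ?_⟩, ?_, ?_, ?_⟩ <;> ring
end

section
/- Every nonzero 2-qubit state a is SLOCC-equivalent to the canonical form |00⟩ + k|11⟩ with k equal to the determinant of a: there exist g₁, g₂ ∈ SL(2,ℂ) such that (g₁,g₂)·a is the state b with b₀₀ = 1, b₁₁ = a₀₀a₁₁ − a₀₁a₁₀, and b₀₁ = b₁₀ = 0. In particular there are exactly two 2-qubit SLOCC entanglement classes: the separable class (determinant zero) and a one-complex-parameter family of entangled orbits parametrised by the determinant. -/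
/-- A 2-qubit state: a map `Fin 2 → Fin 2 → ℂ` with components `a i j`. -/
abbrev QState2 : Type := Fin 2 → Fin 2 → ℂ

/-- The action of the SLOCC-equivalence group `SL(2,ℂ)×SL(2,ℂ)` on 2-qubit states. -/
noncomputable def sloccAct2 (g₁ g₂ : Matrix.SpecialLinearGroup (Fin 2) ℂ)
    (a : QState2) : QState2 :=
  fun i j => ∑ i' : Fin 2, ∑ j' : Fin 2,
    (g₁ : Matrix (Fin 2) (Fin 2) ℂ) i i' * (g₂ : Matrix (Fin 2) (Fin 2) ℂ) j j' * a i' j'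

/-- Every nonzero 2-qubit state is SLOCC-equivalent to the canonical form `|00⟩ + k|11⟩`
where `k = a₀₀a₁₁ − a₀₁a₁₀` is the determinant of the state: there are exactly two 2-qubit
SLOCC classes, the separable one (vanishing determinant) and a one-parameter family of
entangled orbits parametrised by the determinant. -/
theorem twoQubit_canonical_form :
    ∀ a : QState2, a ≠ 0 →
      ∃ g₁ g₂ : Matrix.SpecialLinearGroup (Fin 2) ℂ,
        sloccAct2 g₁ g₂ a = fun i j =>
          if (i, j) = (0, 0) then 1
          else if (i, j) = (1, 1) then a 0 0 * a 1 1 - a 0 1 * a 1 0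
          else 0 := by
  intro a ha
  have key : ∀ (g₁ g₂ : Matrix (Fin 2) (Fin 2) ℂ) (h₁ : g₁.det = 1) (h₂ : g₂.det = 1),
      (∀ i j : Fin 2, (∑ i' : Fin 2, ∑ j' : Fin 2, g₁ i i' * g₂ j j' * a i' j') =
        (if (i, j) = ((0 : Fin 2), (0 : Fin 2)) then 1
          else if (i, j) = (1, 1) then a 0 0 * a 1 1 - a 0 1 * a 1 0 else 0)) →
      ∃ g₁ g₂ : Matrix.SpecialLinearGroup (Fin 2) ℂ,
        sloccAct2 g₁ g₂ a = fun i j =>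
          if (i, j) = (0, 0) then 1
          else if (i, j) = (1, 1) then a 0 0 * a 1 1 - a 0 1 * a 1 0
          else 0 := by
    intro g₁ g₂ h₁ h₂ h
    exact ⟨⟨g₁, h₁⟩, ⟨g₂, h₂⟩, funext fun i => funext fun j => h i j⟩
  by_cases h00 : a 0 0 ≠ 0
  · apply key !![(a 0 0)⁻¹, 0; -a 1 0, a 0 0] !![1, 0; -(a 0 1) * (a 0 0)⁻¹, 1]
    · simp [Matrix.det_fin_two_of]; field_simp
    · simp [Matrix.det_fin_two_of]
    · intro i j
      fin_cases i <;> fin_cases j <;>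
        simp [Fin.sum_univ_two, Prod.ext_iff] <;> (try field_simp) <;> (try ring)
  push_neg at h00
  by_cases h01 : a 0 1 ≠ 0
  · apply key !![(a 0 1)⁻¹, 0; -a 1 1, a 0 1] !![0, 1; -1, a 0 0 * (a 0 1)⁻¹]
    · simp [Matrix.det_fin_two_of]; field_simp
    · simp [Matrix.det_fin_two_of]
    · intro i j
      fin_cases i <;> fin_cases j <;>
        simp [Fin.sum_univ_two, Prod.ext_iff] <;> (try field_simp) <;> (try ring)
  push_neg at h01
  by_cases h10 : a 1 0 ≠ 0
  · apply key !![0, (a 1 0)⁻¹; -a 1 0, a 0 0] !![1, 0; -(a 1 1) * (a 1 0)⁻¹, 1]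
    · simp [Matrix.det_fin_two_of]; field_simp
    · simp [Matrix.det_fin_two_of]
    · intro i j
      fin_cases i <;> fin_cases j <;>
        simp [Fin.sum_univ_two, Prod.ext_iff] <;> (try field_simp) <;> (try ring)
  push_neg at h10
  by_cases h11 : a 1 1 ≠ 0
  · apply key !![0, (a 1 1)⁻¹; -a 1 1, a 0 1] !![0, 1; -1, a 1 0 * (a 1 1)⁻¹]
    · simp [Matrix.det_fin_two_of]; field_simp
    · simp [Matrix.det_fin_two_of]
    · intro i j
      fin_cases i <;> fin_cases j <;>
        simp [Fin.sum_univ_two, Prod.ext_iff] <;> (try field_simp) <;> (try ring)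
  push_neg at h11
  exfalso
  apply ha
  funext i j
  fin_cases i <;> fin_cases j <;> simp [h00, h01, h10, h11]
end
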